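/- Let D = (P, B) be a nontrivial 2-(v,k,λ) design with replication number r, and let G ≤ Aut(D) be a half-flag-transitive automorphism group of D. If G is point-imprimitive on P, then both λ < gcd(r, 2λ)² and r ≤ 4λ(k-2) hold. -/

import Mathlib

open Finset

/-- `blocks` is a (simple) nontrivial 2-(v,k,λ) design on the point set `P`,
with replication number `r`. -/
structure IsTwoDesign {P : Type*} [Fintype P] [DecidableEq P]
    (blocks : Finset (Finset P)) (v k lam r : ℕ) : Prop where
  card_points : Fintype.card P = v
  block_size : ∀ B ∈ blocks, B.card = k
  lam_pos : 0 < lam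
  pair_count : ∀ x y : P, x ≠ y →
    (blocks.filter fun B => x ∈ B ∧ y ∈ B).card = lam
  repl_count : ∀ x : P, (blocks.filter fun B => x ∈ B).card = r
  k_gt : 2 < k
  k_lt : k < v - 1

/-- `G` is a group of automorphisms of the design with block set `blocks`:
every element of `G` maps blocks to blocks. -/
def IsAutGroup {P : Type*} [DecidableEq P] (G : Subgroup (Equiv.Perm P))
    (blocks : Finset (Finset P)) : Prop :=
  ∀ g ∈ G, ∀ B ∈ blocks, B.image ⇑g ∈ blocks

/-- `G` is half-flag-transitive on the design with block set `blocks`: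
`G` is transitive on blocks, and for every block `B` the setwise stabilizer
of `B` in `G` has exactly two orbits `O₁`, `O₂` on the points of `B`,
of equal size (hence each of size `k/2`). -/
def HalfFlagTransitive {P : Type*} [DecidableEq P] (G : Subgroup (Equiv.Perm P))
    (blocks : Finset (Finset P)) : Prop :=
  (∀ B₁ ∈ blocks, ∀ B₂ ∈ blocks, ∃ g ∈ G, B₁.image ⇑g = B₂) ∧
  ∀ B ∈ blocks, ∃ O₁ O₂ : Finset P,
    O₁.Nonempty ∧ O₂.Nonempty ∧ Disjoint O₁ O₂ ∧ O₁ ∪ O₂ = B ∧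
    O₁.card = O₂.card ∧
    (∀ g ∈ G, B.image ⇑g = B → O₁.image ⇑g = O₁) ∧
    (∀ g ∈ G, B.image ⇑g = B → O₂.image ⇑g = O₂) ∧
    (∀ x ∈ O₁, ∀ y ∈ O₁, ∃ g ∈ G, B.image ⇑g = B ∧ g x = y) ∧
    (∀ x ∈ O₂, ∀ y ∈ O₂, ∃ g ∈ G, B.image ⇑g = B ∧ g x = y)

/-- `C` is a partition of the point set `P` that is invariant under `G`. -/
def IsInvariantPartition {P : Type*} [Fintype P] [DecidableEq P]
    (G : Subgroup (Equiv.Perm P)) (C : Finset (Finset P)) : Prop :=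
  (∀ c ∈ C, c.Nonempty) ∧
  (∀ x : P, ∃! c : Finset P, c ∈ C ∧ x ∈ c) ∧
  (∀ g ∈ G, ∀ c ∈ C, c.image ⇑g ∈ C)

/-- A partition of `P` is trivial if all classes are singletons, or it is `{P}`. -/
def TrivialPartition {P : Type*} [Fintype P] [DecidableEq P]
    (C : Finset (Finset P)) : Prop :=
  (∀ c ∈ C, c.card = 1) ∨ C = {Finset.univ}

/-- `G` is point-primitive: it is transitive on points and the only
`G`-invariant partitions of the point set are the trivial ones. -/
def PointPrimitive {P : Type*} [Fintype P] [DecidableEq P]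
    (G : Subgroup (Equiv.Perm P)) : Prop :=
  (∀ x y : P, ∃ g ∈ G, g x = y) ∧
  ∀ C : Finset (Finset P), IsInvariantPartition G C → TrivialPartition C


set_option linter.unusedSectionVars false
set_option maxHeartbeats 1000000

section AuxDesign
variable {P : Type*} [Fintype P] [DecidableEq P]
variable {blocks : Finset (Finset P)} {v k lam r : ℕ}

lemma inter_card_as_sum (B S : Finset P) :
    (B ∩ S).card = ∑ y ∈ S, if y ∈ B then 1 else 0 := by
  rw [← Finset.card_filter]
  congr 1
  ext y; simp [Finset.mem_inter, and_comm]

lemma count1 (hD : IsTwoDesign blocks v k lam r) (S : Finset P) :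
    ∑ B ∈ blocks, (B ∩ S).card = r * S.card := by
  have : ∑ B ∈ blocks, (B ∩ S).card = ∑ B ∈ blocks, ∑ y ∈ S, if y ∈ B then 1 else 0 := by
    exact Finset.sum_congr rfl fun B _ => inter_card_as_sum B S
  rw [this, Finset.sum_comm]
  have : ∀ y ∈ S, (∑ B ∈ blocks, if y ∈ B then 1 else 0) = r := by
    intro y _
    rw [← Finset.card_filter]
    exact hD.repl_count y
  rw [Finset.sum_congr rfl this, Finset.sum_const, smul_eq_mul, mul_comm]

lemma count2 (hD : IsTwoDesign blocks v k lam r) (x : P) (S : Finset P) (hx : x ∈ S) :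
    ∑ B ∈ blocks.filter (fun B => x ∈ B), (B ∩ S).card = lam * (S.card - 1) + r := by
  set R := blocks.filter (fun B => x ∈ B) with hR
  have : ∑ B ∈ R, (B ∩ S).card = ∑ B ∈ R, ∑ y ∈ S, if y ∈ B then 1 else 0 :=
    Finset.sum_congr rfl fun B _ => inter_card_as_sum B S
  rw [this, Finset.sum_comm]
  have hsplit : ∀ y ∈ S, (∑ B ∈ R, if y ∈ B then 1 else 0) =
      if y = x then r else lam := by
    intro y _
    rw [← Finset.card_filter]
    by_cases h : y = x
    · subst h
      simp only [if_pos rfl]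
      have : R.filter (fun B => y ∈ B) = R := by
        apply Finset.filter_true_of_mem
        intro B hB
        exact (Finset.mem_filter.mp hB).2
      rw [this, hR]
      exact hD.repl_count y
    · rw [if_neg h, hR, Finset.filter_filter]
      exact hD.pair_count x y (Ne.symm h)
  rw [Finset.sum_congr rfl hsplit, ← Finset.add_sum_erase S _ hx, if_pos rfl]
  have : ∀ y ∈ S.erase x, (if y = x then r else lam) = lam := by
    intro y hy
    rw [if_neg (Finset.ne_of_mem_erase hy)]
  rw [Finset.sum_congr rfl this, Finset.sum_const, smul_eq_mul,
    Finset.card_erase_of_mem hx, mul_comm, add_comm]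

lemma count3 (hD : IsTwoDesign blocks v k lam r) (S : Finset P) :
    ∑ B ∈ blocks, (B ∩ S).offDiag.card = lam * S.offDiag.card := by
  have key : ∀ B : Finset P, (B ∩ S).offDiag.card
      = ∑ p ∈ S.offDiag, if p.1 ∈ B ∧ p.2 ∈ B then 1 else 0 := by
    intro B
    rw [← Finset.card_filter]
    congr 1
    ext ⟨y, z⟩
    simp only [Finset.mem_offDiag, Finset.mem_filter, Finset.mem_inter]
    tauto
  rw [Finset.sum_congr rfl fun B _ => key B, Finset.sum_comm]
  have : ∀ p ∈ S.offDiag, (∑ B ∈ blocks, if p.1 ∈ B ∧ p.2 ∈ B then 1 else 0) = lam := by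
    intro p hp
    rw [← Finset.card_filter]
    exact hD.pair_count p.1 p.2 (Finset.mem_offDiag.mp hp).2.2
  rw [Finset.sum_congr rfl this, Finset.sum_const, smul_eq_mul, mul_comm]

lemma hbk (hD : IsTwoDesign blocks v k lam r) : blocks.card * k = v * r := by
  have h := count1 hD Finset.univ
  simp only [Finset.inter_univ] at h
  have h2 : ∑ B ∈ blocks, B.card = ∑ B ∈ blocks, k :=
    Finset.sum_congr rfl fun B hB => hD.block_size B hB
  rw [h2, Finset.sum_const, smul_eq_mul, Finset.card_univ, hD.card_points] at h
  rw [h, mul_comm]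

lemma horder (hD : IsTwoDesign blocks v k lam r) : r * k = lam * (v - 1) + r := by
  obtain ⟨x⟩ : Nonempty P := by
    rw [← Fintype.card_pos_iff, hD.card_points]
    have := hD.k_lt; omega
  have h := count2 hD x Finset.univ (Finset.mem_univ x)
  simp only [Finset.inter_univ] at h
  have h2 : ∑ B ∈ blocks.filter (fun B => x ∈ B), B.card
      = ∑ B ∈ blocks.filter (fun B => x ∈ B), k :=
    Finset.sum_congr rfl fun B hB => hD.block_size B (Finset.mem_filter.mp hB).1
  rw [h2, Finset.sum_const, smul_eq_mul, hD.repl_count, Finset.card_univ, hD.card_points] at h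
  exact h

lemma hv5 (hD : IsTwoDesign blocks v k lam r) : 5 ≤ v := by
  have h1 := hD.k_gt; have h2 := hD.k_lt; omega

lemma hr_pos (hD : IsTwoDesign blocks v k lam r) : 0 < r := by
  have h := horder hD
  have h1 := hD.lam_pos
  have h2 := hv5 hD
  rcases Nat.eq_zero_or_pos r with h0 | h0
  · rw [h0] at h; simp at h; omega
  · exact h0

lemma hr_gt_lam (hD : IsTwoDesign blocks v k lam r) : lam < r := by
  have h := horder hD
  have h1 := hD.lam_pos
  have h2 := hv5 hD
  have h3 := hD.k_gt
  have h4 := hD.k_lt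
  have hr := hr_pos hD
  -- r*(k-1) = lam*(v-1), v-1 > k-1 ≥ 2
  nlinarith [h, Nat.sub_add_cancel (show 1 ≤ v by omega)]

-- Fisher's inequality
lemma fisher (hD : IsTwoDesign blocks v k lam r) : Fintype.card P ≤ blocks.card := by
  classical
  -- the incidence linear map
  let φ : (P → ℚ) →ₗ[ℚ] ({ B // B ∈ blocks } → ℚ) :=
    { toFun := fun f B => ∑ y ∈ (B : Finset P), f y
      map_add' := by intro f g; funext B; simp [Finset.sum_add_distrib]
      map_smul' := by intro c f; funext B; simp [Finset.mul_sum] }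
  have hinj : Function.Injective φ := by
    rw [injective_iff_map_eq_zero]
    intro f hf
    -- compute ∑_B (∑_{y∈B} f y)^2
    have expand : ∑ B : { B // B ∈ blocks }, (∑ y ∈ (B : Finset P), f y) * (∑ y ∈ (B : Finset P), f y)
        = ∑ y : P, ∑ z : P,
            (((blocks.filter fun B => y ∈ B ∧ z ∈ B).card : ℚ)) * (f y * f z) := by
      have step1 : ∀ B : Finset P, (∑ y ∈ B, f y) = ∑ y : P, if y ∈ B then f y else 0 := by
        intro B
        rw [Finset.sum_ite_mem]
        congr 1
        simp
      calc ∑ B : { B // B ∈ blocks }, (∑ y ∈ (B : Finset P), f y) * (∑ y ∈ (B : Finset P), f y)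
          = ∑ B ∈ blocks, (∑ y ∈ B, f y) * (∑ y ∈ B, f y) := by
            rw [Finset.sum_coe_sort blocks (fun B => (∑ y ∈ B, f y) * (∑ y ∈ B, f y))]
        _ = ∑ B ∈ blocks, ∑ y : P, ∑ z : P,
              (if y ∈ B ∧ z ∈ B then 1 else 0) * (f y * f z) := by
            refine Finset.sum_congr rfl fun B _ => ?_
            rw [step1 B, Finset.sum_mul_sum]
            refine Finset.sum_congr rfl fun y _ => Finset.sum_congr rfl fun z _ => ?_
            by_cases hy : y ∈ B <;> by_cases hz : z ∈ B <;> simp [hy, hz]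
        _ = ∑ y : P, ∑ z : P, ∑ B ∈ blocks,
              (if y ∈ B ∧ z ∈ B then 1 else 0) * (f y * f z) := by
            rw [Finset.sum_comm]
            refine Finset.sum_congr rfl fun y _ => Finset.sum_comm
        _ = ∑ y : P, ∑ z : P,
              (((blocks.filter fun B => y ∈ B ∧ z ∈ B).card : ℚ)) * (f y * f z) := by
            refine Finset.sum_congr rfl fun y _ => Finset.sum_congr rfl fun z _ => ?_
            rw [← Finset.sum_mul, Finset.sum_boole]
    have hzero : ∑ B : { B // B ∈ blocks }, (∑ y ∈ (B : Finset P), f y) * (∑ y ∈ (B : Finset P), f y) = 0 := by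
      have : ∀ B : { B // B ∈ blocks }, (∑ y ∈ (B : Finset P), f y) = 0 := fun B =>
        congrFun hf B
      simp [this]
    rw [expand] at hzero
    have inner : ∀ y : P, ∑ z : P, ((blocks.filter fun B => y ∈ B ∧ z ∈ B).card : ℚ) * (f y * f z)
        = ((r : ℚ) - lam) * (f y * f y) + (lam : ℚ) * ∑ z : P, f y * f z := by
      intro y
      have term : ∀ z : P, ((blocks.filter fun B => y ∈ B ∧ z ∈ B).card : ℚ) * (f y * f z)
          = (if z = y then ((r : ℚ) - lam) * (f y * f y) else 0) + (lam : ℚ) * (f y * f z) := by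
        intro z
        by_cases hz : z = y
        · subst hz
          have : (blocks.filter fun B => z ∈ B ∧ z ∈ B) = blocks.filter fun B => z ∈ B := by
            congr 1; ext B; simp
          rw [this, hD.repl_count, if_pos rfl]
          ring
        · rw [hD.pair_count y z (fun h => hz h.symm), if_neg hz, zero_add]
      rw [Finset.sum_congr rfl fun z _ => term z, Finset.sum_add_distrib,
        Finset.sum_ite_eq' Finset.univ y (fun _ => ((r : ℚ) - lam) * (f y * f y)),
        if_pos (Finset.mem_univ y), ← Finset.mul_sum]
    have hz2 : ((r : ℚ) - lam) * (∑ y : P, f y * f y)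
        + (lam : ℚ) * ((∑ y : P, f y) * (∑ y : P, f y)) = 0 := by
      rw [Finset.sum_mul_sum, Finset.mul_sum, Finset.mul_sum, ← Finset.sum_add_distrib, ← hzero]
      refine Finset.sum_congr rfl fun y _ => ?_
      rw [inner y, Finset.mul_sum]
    have hrl : (lam : ℚ) < (r : ℚ) := by exact_mod_cast hr_gt_lam hD
    have hlnn : (0 : ℚ) ≤ (lam : ℚ) := by positivity
    have hS1nn : (0 : ℚ) ≤ ∑ y : P, f y * f y :=
      Finset.sum_nonneg fun y _ => mul_self_nonneg (f y)
    have hS2nn : (0 : ℚ) ≤ (∑ y : P, f y) * (∑ y : P, f y) := mul_self_nonneg _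
    have hS1 : ∑ y : P, f y * f y = 0 := by nlinarith
    funext y
    have := (Finset.sum_eq_zero_iff_of_nonneg
      (fun z _ => mul_self_nonneg (f z))).mp hS1 y (Finset.mem_univ y)
    have := mul_self_eq_zero.mp this
    simpa using this
  have := LinearMap.finrank_le_finrank_of_injective hinj
  rwa [Module.finrank_fintype_fun_eq_card, Module.finrank_fintype_fun_eq_card,
    Fintype.card_coe] at this


lemma hr_ge_k (hD : IsTwoDesign blocks v k lam r) : k ≤ r := by
  have h1 := fisher hD
  have h2 := hbk hD
  rw [hD.card_points] at h1
  have hv : 0 < v := by have := hv5 hD; omega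
  nlinarith

end AuxDesign

section AuxGroup
variable {P : Type*} [Fintype P] [DecidableEq P]
variable {G : Subgroup (Equiv.Perm P)} {blocks : Finset (Finset P)}
variable {v k lam r : ℕ}

lemma image_mul (B : Finset P) (g h : Equiv.Perm P) :
    B.image ⇑(h * g) = (B.image ⇑g).image ⇑h := by
  rw [Finset.image_image]; rfl

/-- An invariant nonempty proper subset of a block is a half. -/
lemma half_of_invariant (hHFT : HalfFlagTransitive G blocks) {B : Finset P} (hB : B ∈ blocks)
    {T : Finset P} (hTB : T ⊆ B) (hne : T.Nonempty) (hproper : T ≠ B)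
    (hinv : ∀ g ∈ G, B.image ⇑g = B → ∀ z ∈ T, g z ∈ T) :
    2 * T.card = B.card := by
  obtain ⟨O₁, O₂, hO₁ne, hO₂ne, hdisj, hunion, hcard, _, _, htr₁, htr₂⟩ := hHFT.2 B hB
  have horb : ∀ (O : Finset P), (∀ x ∈ O, ∀ y ∈ O, ∃ g ∈ G, B.image ⇑g = B ∧ g x = y) →
      ∀ z ∈ T, z ∈ O → O ⊆ T := by
    intro O htr z hzT hzO y hyO
    obtain ⟨g, hg, hgB, hgz⟩ := htr z hzO y hyO
    rw [← hgz]; exact hinv g hg hgB z hzT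
  obtain ⟨z, hz⟩ := hne
  have hzB : z ∈ B := hTB hz
  rw [← hunion] at hzB
  have main : ∀ (Oa Ob : Finset P), Oa ∪ Ob = B → Disjoint Oa Ob → Oa.card = Ob.card →
      (∀ x ∈ Oa, ∀ y ∈ Oa, ∃ g ∈ G, B.image ⇑g = B ∧ g x = y) →
      (∀ x ∈ Ob, ∀ y ∈ Ob, ∃ g ∈ G, B.image ⇑g = B ∧ g x = y) →
      z ∈ Oa → 2 * T.card = B.card := by
    intro Oa Ob hun hd hc htra htrb hza
    have hOaT : Oa ⊆ T := horb Oa htra z hz hza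
    have hTOb : ∀ y ∈ T, y ∉ Ob := by
      intro y hyT hyOb
      have : Ob ⊆ T := horb Ob htrb y hyT hyOb
      apply hproper
      apply Finset.Subset.antisymm hTB
      rw [← hun]; exact Finset.union_subset hOaT this
    have hTOa : T = Oa := by
      apply Finset.Subset.antisymm
      · intro y hy
        have : y ∈ Oa ∪ Ob := by rw [hun]; exact hTB hy
        rcases Finset.mem_union.mp this with h | h
        · exact h
        · exact absurd h (hTOb y hy)
      · exact hOaT
    have hcardB : Oa.card + Ob.card = B.card := by
      rw [← hun, Finset.card_union_of_disjoint hd]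
    rw [hTOa]; omega
  rcases Finset.mem_union.mp hzB with h | h
  · exact main O₁ O₂ hunion hdisj hcard htr₁ htr₂ h
  · exact main O₂ O₁ (by rw [Finset.union_comm]; exact hunion) hdisj.symm hcard.symm htr₂ htr₁ h

lemma point_in_block (hD : IsTwoDesign blocks v k lam r) (z : P) :
    ∃ B ∈ blocks, z ∈ B := by
  have h := hD.repl_count z
  have hr := hr_pos hD
  have : (blocks.filter fun B => z ∈ B).Nonempty := by
    rw [← Finset.card_pos, h]; exact hr
  obtain ⟨B, hB⟩ := this
  exact ⟨B, (Finset.mem_filter.mp hB).1, (Finset.mem_filter.mp hB).2⟩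

lemma point_trans (hD : IsTwoDesign blocks v k lam r)
    (hHFT : HalfFlagTransitive G blocks) : ∀ u w : P, ∃ g ∈ G, (g : Equiv.Perm P) u = w := by
  classical
  by_contra hcon
  push_neg at hcon
  obtain ⟨u, w, hno⟩ := hcon
  set X : Finset P := univ.filter (fun y => ∃ g ∈ G, (g : Equiv.Perm P) u = y) with hX
  set Y : Finset P := univ.filter (fun y => ∃ g ∈ G, (g : Equiv.Perm P) w = y) with hY
  have hmemX : ∀ y : P, y ∈ X ↔ ∃ g ∈ G, (g : Equiv.Perm P) u = y := by
    intro y; simp [hX]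
  have hmemY : ∀ y : P, y ∈ Y ↔ ∃ g ∈ G, (g : Equiv.Perm P) w = y := by
    intro y; simp [hY]
  have hclX : ∀ g ∈ G, ∀ z ∈ X, (g : Equiv.Perm P) z ∈ X := by
    intro g hg z hz
    obtain ⟨g', hg', hgu⟩ := (hmemX z).mp hz
    exact (hmemX _).mpr ⟨g * g', mul_mem hg hg', by rw [Equiv.Perm.mul_apply, hgu]⟩
  have hclY : ∀ g ∈ G, ∀ z ∈ Y, (g : Equiv.Perm P) z ∈ Y := by
    intro g hg z hz
    obtain ⟨g', hg', hgu⟩ := (hmemY z).mp hz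
    exact (hmemY _).mpr ⟨g * g', mul_mem hg hg', by rw [Equiv.Perm.mul_apply, hgu]⟩
  have hdisjXY : Disjoint X Y := by
    rw [Finset.disjoint_left]
    intro y hyX hyY
    obtain ⟨g1, hg1, hgu⟩ := (hmemX y).mp hyX
    obtain ⟨g2, hg2, hgw⟩ := (hmemY y).mp hyY
    apply hno (g2⁻¹ * g1) (mul_mem (inv_mem hg2) hg1)
    rw [Equiv.Perm.mul_apply, hgu, ← hgw, Equiv.Perm.inv_def, Equiv.symm_apply_apply]
  -- every block meets X exactly in a half
  have hhalf : ∀ B ∈ blocks, 2 * (B ∩ X).card = k := by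
    intro B hB
    obtain ⟨B₀, hB₀, huB₀⟩ := point_in_block hD u
    obtain ⟨g, hg, hgB⟩ := hHFT.1 B₀ hB₀ B hB
    have hXmeets : (g : Equiv.Perm P) u ∈ B ∩ X := by
      rw [Finset.mem_inter]
      constructor
      · rw [← hgB]; exact Finset.mem_image_of_mem _ huB₀
      · exact (hmemX _).mpr ⟨g, hg, rfl⟩
    obtain ⟨B₁, hB₁, hwB₁⟩ := point_in_block hD w
    obtain ⟨g', hg', hgB'⟩ := hHFT.1 B₁ hB₁ B hB
    have hYmeets : (g' : Equiv.Perm P) w ∈ B ∩ Y := by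
      rw [Finset.mem_inter]
      constructor
      · rw [← hgB']; exact Finset.mem_image_of_mem _ hwB₁
      · exact (hmemY _).mpr ⟨g', hg', rfl⟩
    have hsubB : B ∩ X ⊆ B := Finset.inter_subset_left
    have hne : (B ∩ X).Nonempty := ⟨_, hXmeets⟩
    have hproper : B ∩ X ≠ B := by
      intro h
      have : (g' : Equiv.Perm P) w ∈ X := by
        have hmem : (g' : Equiv.Perm P) w ∈ B := (Finset.mem_inter.mp hYmeets).1
        rw [← h] at hmem
        exact (Finset.mem_inter.mp hmem).2
      exact Finset.disjoint_left.mp hdisjXY this (Finset.mem_inter.mp hYmeets).2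
    have hinv : ∀ g ∈ G, B.image ⇑(g : Equiv.Perm P) = B → ∀ z ∈ B ∩ X,
        (g : Equiv.Perm P) z ∈ B ∩ X := by
      intro g hgG hgBB z hz
      rw [Finset.mem_inter]
      obtain ⟨hz1, hz2⟩ := Finset.mem_inter.mp hz
      exact ⟨by rw [← hgBB]; exact Finset.mem_image_of_mem _ hz1, hclX g hgG z hz2⟩
    have := half_of_invariant hHFT hB hsubB hne hproper hinv
    rw [hD.block_size B hB] at this
    exact this
  -- flag counting: 2|X| = v
  have hb_pos : 0 < blocks.card := by
    obtain ⟨B, hB, _⟩ := point_in_block hD u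
    exact Finset.card_pos.mpr ⟨B, hB⟩
  have hflag := count1 hD X
  have h2X : 2 * X.card = v := by
    have h1 : ∑ B ∈ blocks, 2 * (B ∩ X).card = blocks.card * k :=
      by rw [Finset.sum_congr rfl fun B hB => hhalf B hB, Finset.sum_const, smul_eq_mul]
    rw [← Finset.mul_sum, hflag, hbk hD] at h1
    have hr := hr_pos hD
    have : (2 * X.card) * r = v * r := by
      rw [show (2 * X.card) * r = 2 * (r * X.card) from by ring, h1]
    exact Nat.eq_of_mul_eq_mul_right hr this
  -- pair counting on X and on univ
  have hqq : ∀ q kk : ℕ, 2 * q = kk → 4 * (q * q - q) = kk * kk - 2 * kk := by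
    intro q kk h
    have hk : kk = 2 * q := h.symm
    subst hk
    rcases Nat.eq_zero_or_pos q with h0 | h0
    · subst h0; simp
    have hle : q ≤ q * q := Nat.le_mul_of_pos_left q h0
    have h2 : 2 * (2 * q) ≤ (2 * q) * (2 * q) := by nlinarith
    zify [hle, h2]
    ring
  have hpairX := count3 hD X
  have hE2 : lam * (v * v - 2 * v) = blocks.card * (k * k - 2 * k) := by
    have hper : ∀ B ∈ blocks, 4 * (B ∩ X).offDiag.card = k * k - 2 * k := by
      intro B hB
      rw [Finset.offDiag_card]
      exact hqq _ _ (hhalf B hB)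
    have h1 : ∑ B ∈ blocks, 4 * (B ∩ X).offDiag.card = blocks.card * (k * k - 2 * k) := by
      rw [Finset.sum_congr rfl hper, Finset.sum_const, smul_eq_mul]
    rw [← Finset.mul_sum, hpairX, Finset.offDiag_card] at h1
    have hx := hqq X.card v h2X
    rw [← hx, show lam * (4 * (X.card * X.card - X.card))
      = 4 * (lam * (X.card * X.card - X.card)) from by ring]
    exact h1
  have hpairU := count3 hD Finset.univ
  have hE1 : lam * (v * v - v) = blocks.card * (k * k - k) := by
    have h1 : ∀ B ∈ blocks, (B ∩ Finset.univ).offDiag.card = k * k - k := by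
      intro B hB
      rw [Finset.inter_univ, Finset.offDiag_card, hD.block_size B hB]
    rw [Finset.sum_congr rfl h1, Finset.sum_const, smul_eq_mul] at hpairU
    rw [Finset.offDiag_card, Finset.card_univ, hD.card_points] at hpairU
    exact hpairU.symm
  -- derive contradiction
  have hk3 : 3 ≤ k := hD.k_gt
  have hkv : k + 2 ≤ v := by have := hD.k_lt; have := hv5 hD; omega
  have hlam := hD.lam_pos
  have hkk : k ≤ k * k := Nat.le_mul_of_pos_left k (by omega)
  have hkk2 : 2 * k ≤ k * k := by nlinarith
  have hvv : v ≤ v * v := Nat.le_mul_of_pos_left v (by omega)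
  have hvv2 : 2 * v ≤ v * v := by nlinarith
  zify [hkk, hkk2, hvv, hvv2] at hE1 hE2
  have hbklv : (blocks.card : ℤ) * k = lam * v := by linarith
  have hb' : (1 : ℤ) ≤ blocks.card := by exact_mod_cast hb_pos
  have hl' : (1 : ℤ) ≤ lam := by exact_mod_cast hlam
  have hv' : (5 : ℤ) ≤ v := by exact_mod_cast hv5 hD
  have hkv' : (k : ℤ) + 2 ≤ v := by exact_mod_cast hkv
  nlinarith [mul_le_mul_of_nonneg_right hbklv.le (by positivity : (0:ℤ) ≤ (k:ℤ)),
    mul_le_mul_of_nonneg_right hbklv.ge (by positivity : (0:ℤ) ≤ (k:ℤ)),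
    mul_pos (mul_pos hl' (by linarith : (0:ℤ) < v)) (by linarith : (0:ℤ) < v - k)]

end AuxGroup

section Flag
variable {P : Type*} [Fintype P] [DecidableEq P]
variable {G : Subgroup (Equiv.Perm P)} {blocks : Finset (Finset P)}
variable {v k lam r : ℕ}

/-- flag relation: flag `(x, B₁)` is mapped to flag `(z, B)` by some `g ∈ G`. -/
def FRel (G : Subgroup (Equiv.Perm P)) (x : P) (B₁ : Finset P) (z : P) (B : Finset P) : Prop :=
  ∃ g ∈ G, B₁.image ⇑g = B ∧ g x = z

lemma frel_refl (G : Subgroup (Equiv.Perm P)) (x : P) (B : Finset P) : FRel G x B x B :=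
  ⟨1, one_mem G, by simp, rfl⟩

lemma frel_symm {x z : P} {B₁ B : Finset P}
    (h : FRel G x B₁ z B) : FRel G z B x B₁ := by
  obtain ⟨g, hg, hB, hx⟩ := h
  refine ⟨g⁻¹, inv_mem hg, ?_, by rw [← hx, Equiv.Perm.inv_def, Equiv.symm_apply_apply]⟩
  rw [← hB, Finset.image_image]
  have : ⇑g⁻¹ ∘ ⇑g = id := by funext t; simp
  rw [this, Finset.image_id]

lemma frel_trans {x y z : P} {B₁ B₂ B₃ : Finset P}
    (h1 : FRel G x B₁ y B₂) (h2 : FRel G y B₂ z B₃) : FRel G x B₁ z B₃ := by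
  obtain ⟨g, hg, hB, hx⟩ := h1
  obtain ⟨g', hg', hB', hy⟩ := h2
  refine ⟨g' * g, mul_mem hg' hg, ?_, by rw [Equiv.Perm.mul_apply, hx, hy]⟩
  rw [show ⇑(g' * g) = ⇑g' ∘ ⇑g from rfl, ← Finset.image_image, hB, hB']

lemma frel_mem_block {x z : P} {B₁ B : Finset P} (hx : x ∈ B₁)
    (h : FRel G x B₁ z B) : z ∈ B := by
  obtain ⟨g, hg, hB, hgx⟩ := h
  rw [← hB, ← hgx]
  exact Finset.mem_image_of_mem _ hx

lemma frel_pigeonhole (hHFT : HalfFlagTransitive G blocks) {x : P}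
    {Ba Bb Bc : Finset P} (hBa : Ba ∈ blocks) (hBb : Bb ∈ blocks) (hBc : Bc ∈ blocks)
    (hxa : x ∈ Ba) (hxb : x ∈ Bb) (hxc : x ∈ Bc) :
    FRel G x Bb x Ba ∨ FRel G x Bc x Ba ∨ FRel G x Bb x Bc := by
  obtain ⟨g1, hg1, hImg1⟩ := hHFT.1 Bb hBb Ba hBa
  obtain ⟨g2, hg2, hImg2⟩ := hHFT.1 Bc hBc Ba hBa
  have hu1 : g1 x ∈ Ba := by rw [← hImg1]; exact Finset.mem_image_of_mem _ hxb
  have hu2 : g2 x ∈ Ba := by rw [← hImg2]; exact Finset.mem_image_of_mem _ hxc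
  obtain ⟨O₁, O₂, _, _, _, hun, _, _, _, htr₁, htr₂⟩ := hHFT.2 Ba hBa
  have hBa2 : Ba.image ⇑g2⁻¹ = Bc := by
    rw [← hImg2, Finset.image_image]
    have : ⇑g2⁻¹ ∘ ⇑g2 = id := by funext t; simp
    rw [this, Finset.image_id]
  have mkleft : ∀ h : Equiv.Perm P, h ∈ G → Ba.image ⇑h = Ba → h (g1 x) = x →
      FRel G x Bb x Ba := by
    intro h hh hImg hApp
    refine ⟨h * g1, mul_mem hh hg1, ?_, by rw [Equiv.Perm.mul_apply, hApp]⟩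
    rw [show ⇑(h * g1) = ⇑h ∘ ⇑g1 from rfl, ← Finset.image_image, hImg1, hImg]
  have mkmid : ∀ h : Equiv.Perm P, h ∈ G → Ba.image ⇑h = Ba → h (g2 x) = x →
      FRel G x Bc x Ba := by
    intro h hh hImg hApp
    refine ⟨h * g2, mul_mem hh hg2, ?_, by rw [Equiv.Perm.mul_apply, hApp]⟩
    rw [show ⇑(h * g2) = ⇑h ∘ ⇑g2 from rfl, ← Finset.image_image, hImg2, hImg]
  have mkright : ∀ h : Equiv.Perm P, h ∈ G → Ba.image ⇑h = Ba → h (g1 x) = g2 x →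
      FRel G x Bb x Bc := by
    intro h hh hImg hApp
    refine ⟨g2⁻¹ * (h * g1), mul_mem (inv_mem hg2) (mul_mem hh hg1), ?_, ?_⟩
    · rw [show ⇑(g2⁻¹ * (h * g1)) = ⇑g2⁻¹ ∘ (⇑h ∘ ⇑g1) from rfl]
      rw [← Finset.image_image (g := ⇑g2⁻¹), ← Finset.image_image (g := ⇑h), hImg1, hImg, hBa2]
    · rw [show (g2⁻¹ * (h * g1)) x = g2⁻¹ (h (g1 x)) from rfl, hApp, Equiv.Perm.inv_def, Equiv.symm_apply_apply]
  have hxu : x ∈ O₁ ∪ O₂ := by rw [hun]; exact hxa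
  have hu1u : g1 x ∈ O₁ ∪ O₂ := by rw [hun]; exact hu1
  have hu2u : g2 x ∈ O₁ ∪ O₂ := by rw [hun]; exact hu2
  rcases Finset.mem_union.mp hxu with hx1 | hx2 <;>
    rcases Finset.mem_union.mp hu1u with h11 | h12 <;>
      rcases Finset.mem_union.mp hu2u with h21 | h22
  · obtain ⟨h, hh, hi, ha⟩ := htr₁ _ h11 _ hx1; exact Or.inl (mkleft h hh hi ha)
  · obtain ⟨h, hh, hi, ha⟩ := htr₁ _ h11 _ hx1; exact Or.inl (mkleft h hh hi ha)
  · obtain ⟨h, hh, hi, ha⟩ := htr₁ _ h21 _ hx1; exact Or.inr (Or.inl (mkmid h hh hi ha))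
  · obtain ⟨h, hh, hi, ha⟩ := htr₂ _ h12 _ h22; exact Or.inr (Or.inr (mkright h hh hi ha))
  · obtain ⟨h, hh, hi, ha⟩ := htr₁ _ h11 _ h21; exact Or.inr (Or.inr (mkright h hh hi ha))
  · obtain ⟨h, hh, hi, ha⟩ := htr₂ _ h22 _ hx2; exact Or.inr (Or.inl (mkmid h hh hi ha))
  · obtain ⟨h, hh, hi, ha⟩ := htr₂ _ h12 _ hx2; exact Or.inl (mkleft h hh hi ha)
  · obtain ⟨h, hh, hi, ha⟩ := htr₂ _ h12 _ hx2; exact Or.inl (mkleft h hh hi ha)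
end Flag

section Flag2
open scoped Classical
variable {P : Type*} [Fintype P] [DecidableEq P]
variable {G : Subgroup (Equiv.Perm P)} {blocks : Finset (Finset P)}
variable {v k lam r : ℕ}

lemma frel_half (hD : IsTwoDesign blocks v k lam r) (hAut : IsAutGroup G blocks)
    (hHFT : HalfFlagTransitive G blocks) {x : P} {B₁ B₂ : Finset P}
    (hB₁ : B₁ ∈ blocks) (hx₁ : x ∈ B₁) (hB₂ : B₂ ∈ blocks) (hx₂ : x ∈ B₂)
    (hnot : ¬ FRel G x B₁ x B₂) :
    2 * (blocks.filter (fun B => FRel G x B₁ x B)).card = r := by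
  set f : P → ℕ := fun z => (blocks.filter (fun B => FRel G x B₁ z B)).card with hf
  have hstep : ∀ τ : Equiv.Perm P, τ ∈ G → ∀ z : P, f z = f (τ z) := by
    intro τ hτ z
    refine Finset.card_bij' (fun B _ => B.image ⇑τ) (fun B _ => B.image ⇑τ⁻¹) ?_ ?_ ?_ ?_
    · intro B hB
      rw [Finset.mem_filter] at hB ⊢
      exact ⟨hAut τ hτ B hB.1, frel_trans hB.2 ⟨τ, hτ, rfl, rfl⟩⟩
    · intro B hB
      rw [Finset.mem_filter] at hB ⊢
      refine ⟨hAut τ⁻¹ (inv_mem hτ) B hB.1, frel_trans hB.2 ⟨τ⁻¹, inv_mem hτ, rfl,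
        τ.symm_apply_apply z⟩⟩
    · intro B _
      rw [Finset.image_image]
      have : ⇑τ⁻¹ ∘ ⇑τ = id := by funext t; simp
      rw [this, Finset.image_id]
    · intro B _
      rw [Finset.image_image]
      have : ⇑τ ∘ ⇑τ⁻¹ = id := by funext t; simp
      rw [this, Finset.image_id]
  have hconstf : ∀ z : P, f z = f x := by
    intro z
    obtain ⟨τ, hτ, hτx⟩ := point_trans hD hHFT x z
    rw [← hτx, ← hstep τ hτ x]
  have hhalfB : ∀ B ∈ blocks, 2 * (univ.filter (fun z => FRel G x B₁ z B)).card = k := by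
    intro B hB
    set T := univ.filter (fun z => FRel G x B₁ z B) with hT
    have hTB : T ⊆ B := by
      intro z hz
      exact frel_mem_block hx₁ (Finset.mem_filter.mp hz).2
    have hTne : T.Nonempty := by
      obtain ⟨g, hg, hImg⟩ := hHFT.1 B₁ hB₁ B hB
      exact ⟨g x, Finset.mem_filter.mpr ⟨Finset.mem_univ _, ⟨g, hg, hImg, rfl⟩⟩⟩
    have hTproper : T ≠ B := by
      intro hTeq
      apply hnot
      obtain ⟨g₂, hg₂, hImg₂⟩ := hHFT.1 B₂ hB₂ B hB
      have hz₂ : g₂ x ∈ B := by rw [← hImg₂]; exact Finset.mem_image_of_mem _ hx₂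
      rw [← hTeq, hT, Finset.mem_filter] at hz₂
      exact frel_trans hz₂.2 (frel_symm ⟨g₂, hg₂, hImg₂, rfl⟩)
    have hTinv : ∀ g ∈ G, B.image ⇑g = B → ∀ z ∈ T, g z ∈ T := by
      intro g hg hImg z hz
      rw [hT, Finset.mem_filter] at hz ⊢
      exact ⟨Finset.mem_univ _, frel_trans hz.2 ⟨g, hg, hImg, rfl⟩⟩
    have := half_of_invariant hHFT hB hTB hTne hTproper hTinv
    rw [hD.block_size B hB] at this
    exact this
  -- double counting
  have hswap : ∑ z : P, f z = ∑ B ∈ blocks, (univ.filter (fun z => FRel G x B₁ z B)).card := by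
    have h1 : ∀ z : P, f z = ∑ B ∈ blocks, if FRel G x B₁ z B then 1 else 0 := by
      intro z; rw [hf]; exact Finset.card_filter _ _
    have h2 : ∀ B ∈ blocks, (univ.filter (fun z => FRel G x B₁ z B)).card
        = ∑ z : P, if FRel G x B₁ z B then 1 else 0 := by
      intro B _; exact Finset.card_filter _ _
    rw [Finset.sum_congr rfl (fun z _ => h1 z), Finset.sum_comm,
      Finset.sum_congr rfl h2]
  have hleft : ∑ z : P, f z = v * f x := by
    rw [Finset.sum_congr rfl (fun z _ => hconstf z), Finset.sum_const, smul_eq_mul,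
      Finset.card_univ, hD.card_points]
  have hright : 2 * ∑ B ∈ blocks, (univ.filter (fun z => FRel G x B₁ z B)).card
      = blocks.card * k := by
    rw [Finset.mul_sum, Finset.sum_congr rfl hhalfB, Finset.sum_const, smul_eq_mul]
  have hcomb : 2 * (v * f x) = v * r := by
    rw [← hleft, hswap, hright, hbk hD]
  have hv : 0 < v := by have := hv5 hD; omega
  have : v * (2 * f x) = v * r := by rw [← hcomb]; ring
  exact Nat.eq_of_mul_eq_mul_left hv this

end Flag2

section Key
open scoped Classical
variable {P : Type*} [Fintype P] [DecidableEq P]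
variable {G : Subgroup (Equiv.Perm P)} {blocks : Finset (Finset P)}
variable {v k lam r : ℕ}

lemma key_claim (hD : IsTwoDesign blocks v k lam r) (hAut : IsAutGroup G blocks)
    (hHFT : HalfFlagTransitive G blocks) {C : Finset (Finset P)}
    (hC : IsInvariantPartition G C) {Δ : Finset P} (hΔ : Δ ∈ C) {x : P} (hx : x ∈ Δ) :
    ∃ E : ℕ, 2 * (lam * (Δ.card - 1) + r) = r * E := by
  obtain ⟨hCne, hCuniq, hCinv⟩ := hC
  have hcount := count2 hD x Δ hx
  have hRcard : (blocks.filter (fun B => x ∈ B)).card = r := hD.repl_count x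
  set R := blocks.filter (fun B => x ∈ B) with hR
  -- |B ∩ Δ| is constant along FRel at x
  have hconst : ∀ B B' : Finset P, FRel G x B x B' → (B ∩ Δ).card = (B' ∩ Δ).card := by
    rintro B B' ⟨g, hg, hImg, hgx⟩
    have hΔg : Δ.image ⇑g = Δ := by
      have h1 : Δ.image ⇑g ∈ C := hCinv g hg Δ hΔ
      have h2 : x ∈ Δ.image ⇑g := by rw [← hgx]; exact Finset.mem_image_of_mem _ hx
      obtain ⟨c₀, _, huniq⟩ := hCuniq x
      rw [huniq _ ⟨h1, h2⟩, huniq _ ⟨hΔ, hx⟩]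
    calc (B ∩ Δ).card = ((B ∩ Δ).image ⇑g).card :=
          (Finset.card_image_of_injective _ g.injective).symm
      _ = (B' ∩ Δ).card := by rw [Finset.image_inter _ _ g.injective, hImg, hΔg]
  have hRne : R.Nonempty := by
    rw [← Finset.card_pos, hRcard]; exact hr_pos hD
  obtain ⟨B₁, hB₁R⟩ := hRne
  have hB₁ : B₁ ∈ blocks := (Finset.mem_filter.mp hB₁R).1
  have hxB₁ : x ∈ B₁ := (Finset.mem_filter.mp hB₁R).2
  by_cases hall : ∀ B ∈ R, FRel G x B₁ x B
  · -- a single orbit on the blocks through x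
    have hcc : ∀ B ∈ R, (B ∩ Δ).card = (B₁ ∩ Δ).card :=
      fun B hB => (hconst _ _ (hall B hB)).symm
    rw [Finset.sum_congr rfl hcc, Finset.sum_const, smul_eq_mul, hRcard] at hcount
    exact ⟨2 * (B₁ ∩ Δ).card, by rw [← hcount]; ring⟩
  · push_neg at hall
    obtain ⟨B₂, hB₂R, hnot⟩ := hall
    have hB₂ : B₂ ∈ blocks := (Finset.mem_filter.mp hB₂R).1
    have hxB₂ : x ∈ B₂ := (Finset.mem_filter.mp hB₂R).2
    set R₁ := R.filter (fun B => FRel G x B₁ x B) with hR₁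
    set R₂ := R \ R₁ with hR₂
    have hsplit : ∀ B ∈ R₂, FRel G x B₂ x B := by
      intro B hB
      rw [hR₂, Finset.mem_sdiff] at hB
      obtain ⟨hBR, hBn⟩ := hB
      have hnB₁ : ¬ FRel G x B₁ x B := fun hc => hBn (Finset.mem_filter.mpr ⟨hBR, hc⟩)
      have hBb : B ∈ blocks := (Finset.mem_filter.mp hBR).1
      have hxB : x ∈ B := (Finset.mem_filter.mp hBR).2
      rcases frel_pigeonhole hHFT hBb hB₁ hB₂ hxB hxB₁ hxB₂ with h | h | h
      · exact absurd h hnB₁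
      · exact h
      · exact absurd h hnot
    have hsum : ∑ B ∈ R, (B ∩ Δ).card
        = R₂.card * (B₂ ∩ Δ).card + R₁.card * (B₁ ∩ Δ).card := by
      rw [← Finset.sum_sdiff (show R₁ ⊆ R from Finset.filter_subset _ _), ← hR₂]
      congr 1
      · rw [Finset.sum_congr rfl (fun B hB => (hconst _ _ (hsplit B hB)).symm),
          Finset.sum_const, smul_eq_mul]
      · rw [Finset.sum_congr rfl
          (fun B hB => (hconst _ _ (Finset.mem_filter.mp hB).2).symm),
          Finset.sum_const, smul_eq_mul]
    -- R₁ is half of the blocks through x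
    have hfilter_eq : R₁ = blocks.filter (fun B => FRel G x B₁ x B) := by
      rw [hR₁, hR, Finset.filter_filter]
      congr 1
      ext B
      constructor
      · rintro ⟨_, h⟩; exact h
      · intro h; exact ⟨frel_mem_block hxB₁ h, h⟩
    have hhalf : 2 * R₁.card = r := by
      rw [hfilter_eq]
      exact frel_half hD hAut hHFT hB₁ hxB₁ hB₂ hxB₂ hnot
    have hR₁le : R₁ ⊆ R := Finset.filter_subset _ _
    have hR₂card : R₂.card = R₁.card := by
      rw [hR₂, Finset.card_sdiff_of_subset hR₁le, hRcard]
      have h1 : R₁.card ≤ r := by rw [← hRcard]; exact Finset.card_le_card hR₁le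
      omega
    refine ⟨(B₂ ∩ Δ).card + (B₁ ∩ Δ).card, ?_⟩
    rw [← hcount, hsum, hR₂card,
      show R₁.card * (B₂ ∩ Δ).card + R₁.card * (B₁ ∩ Δ).card
        = R₁.card * ((B₂ ∩ Δ).card + (B₁ ∩ Δ).card) from by ring,
      show 2 * (R₁.card * ((B₂ ∩ Δ).card + (B₁ ∩ Δ).card))
        = (2 * R₁.card) * ((B₂ ∩ Δ).card + (B₁ ∩ Δ).card) from by ring, hhalf]

end Key

lemma final_arith (v k lam r c d E : ℕ)
    (hlam : 0 < lam) (hk : 3 ≤ k) (hkv : k < v - 1) (hrk : k ≤ r)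
    (horder : r * k = lam * (v - 1) + r)
    (hkey : 2 * (lam * (c - 1) + r) = r * E)
    (hv : v = c * d) (hc : 2 ≤ c) (hd : 2 ≤ d) :
    lam < Nat.gcd r (2 * lam) ^ 2 ∧ r ≤ 4 * lam * (k - 2) := by
  set m := Nat.gcd r (2 * lam) with hm
  have hrpos : 0 < r := by omega
  have hmpos : 0 < m := Nat.gcd_pos_of_pos_left _ hrpos
  have hmr : m ∣ r := Nat.gcd_dvd_left _ _
  have hml : m ∣ 2 * lam := Nat.gcd_dvd_right _ _
  set n := r / m with hn
  have hrmn : r = m * n := (Nat.mul_div_cancel' hmr).symm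
  obtain ⟨μ, hμ⟩ := hml
  have hμeq : (2 * lam) / m = μ := by rw [hμ]; exact Nat.mul_div_cancel_left μ hmpos
  have hcop : Nat.Coprime n μ := by
    have := Nat.coprime_div_gcd_div_gcd (m := r) (n := 2 * lam) (by rw [← hm]; exact hmpos)
    rwa [← hm, ← hn, hμeq] at this
  have hnpos : 0 < n := by
    rcases Nat.eq_zero_or_pos n with h | h
    · rw [h, mul_zero] at hrmn; omega
    · exact h
  have hE2 : 2 ≤ E := by
    by_contra hEc
    push_neg at hEc
    have h1 : r * E ≤ r * 1 := Nat.mul_le_mul_left r (by omega)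
    have h2 : r * 1 = r := by ring
    have h3 : 2 * (lam * (c - 1) + r) = 2 * (lam * (c - 1)) + 2 * r := by ring
    omega
  obtain ⟨E', hE'⟩ : ∃ E', E = E' + 2 := ⟨E - 2, by omega⟩
  subst hE'
  have hdvd1 : r ∣ 2 * lam * (c - 1) := by
    refine ⟨E', ?_⟩
    have h1 : r * (E' + 2) = r * E' + 2 * r := by ring
    have h2 : 2 * (lam * (c - 1) + r) = 2 * lam * (c - 1) + 2 * r := by ring
    omega
  have hlv : lam * (v - 1) = r * (k - 1) := by
    have hk1 : k - 1 + 1 = k := by omega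
    have h2 : r * ((k - 1) + 1) = r * (k - 1) + r := by ring
    rw [hk1] at h2
    omega
  have hdvd2 : r ∣ 2 * lam * (v - 1) := by
    refine ⟨2 * (k - 1), ?_⟩
    rw [show 2 * lam * (v - 1) = 2 * (lam * (v - 1)) from by ring, hlv]
    ring
  have hnc : n ∣ c - 1 := by
    have h1 : m * n ∣ m * (μ * (c - 1)) := by
      rw [← hrmn, show m * (μ * (c - 1)) = m * μ * (c - 1) from by ring, ← hμ]
      exact hdvd1
    exact hcop.dvd_of_dvd_mul_left ((Nat.mul_dvd_mul_iff_left hmpos).mp h1)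
  have hnv : n ∣ v - 1 := by
    have h1 : m * n ∣ m * (μ * (v - 1)) := by
      rw [← hrmn, show m * (μ * (v - 1)) = m * μ * (v - 1) from by ring, ← hμ]
      exact hdvd2
    exact hcop.dvd_of_dvd_mul_left ((Nat.mul_dvd_mul_iff_left hmpos).mp h1)
  have hvdecomp : v - 1 = c * (d - 1) + (c - 1) := by
    have h1 : c * d = c * (d - 1) + c := by
      have h2 : c * ((d - 1) + 1) = c * (d - 1) + c := by ring
      rw [show (d - 1) + 1 = d from by omega] at h2
      omega
    omega
  have hncd : n ∣ c * (d - 1) := by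
    have h2 := Nat.dvd_sub hnv hnc
    rw [hvdecomp, Nat.add_sub_cancel] at h2
    exact h2
  have hcopnc : Nat.Coprime n c := by
    obtain ⟨t, ht⟩ := hnc
    have hct : c = n * t + 1 := by omega
    rw [Nat.Coprime, hct]
    simp [Nat.gcd_add_mul_right_right]
  have hnd : n ∣ d - 1 := hcopnc.dvd_of_dvd_mul_left hncd
  have hcn : n + 1 ≤ c := by
    have := Nat.le_of_dvd (by omega : 0 < c - 1) hnc
    omega
  have hdn : n + 1 ≤ d := by
    have := Nat.le_of_dvd (by omega : 0 < d - 1) hnd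
    omega
  have hvlb : n * n + 2 * n ≤ v - 1 := by
    have h1 : (n + 1) * (n + 1) ≤ c * d := Nat.mul_le_mul hcn hdn
    have h2 : (n + 1) * (n + 1) = n * n + 2 * n + 1 := by ring
    omega
  have hmlam : m ≤ 2 * lam := Nat.le_of_dvd (by omega) ⟨μ, hμ⟩
  -- cast to ℤ
  have hordZ : (lam : ℤ) * ((v - 1 : ℕ) : ℤ) = (m : ℤ) * n * ((k - 1 : ℕ) : ℤ) := by
    have h2 : lam * (v - 1) = m * n * (k - 1) := by rw [hlv, ← hrmn]
    exact_mod_cast h2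
  have hvlbZ : ((n : ℤ) * n + 2 * n) ≤ ((v - 1 : ℕ) : ℤ) := by exact_mod_cast hvlb
  have hk1Z : ((k - 1 : ℕ) : ℤ) = (k : ℤ) - 1 := by
    have : 1 ≤ k := by omega
    omega
  have hrkZ : (k : ℤ) ≤ (m : ℤ) * n := by
    have : (k : ℤ) ≤ ((m * n : ℕ) : ℤ) := by exact_mod_cast (hrmn ▸ hrk)
    rwa [Nat.cast_mul] at this
  have hmlamZ : (m : ℤ) ≤ 2 * (lam : ℤ) := by exact_mod_cast hmlam
  have hlamZ : (1 : ℤ) ≤ (lam : ℤ) := by exact_mod_cast hlam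
  have hnZ : (1 : ℤ) ≤ (n : ℤ) := by exact_mod_cast hnpos
  have hmZ : (1 : ℤ) ≤ (m : ℤ) := by exact_mod_cast hmpos
  have hkZ : (3 : ℤ) ≤ (k : ℤ) := by exact_mod_cast hk
  -- key inequality : lam * (n+2) ≤ m * (k-1)
  have hkeyineq : (lam : ℤ) * ((n : ℤ) + 2) ≤ (m : ℤ) * ((k : ℤ) - 1) := by
    have h1 : (lam : ℤ) * ((n : ℤ) * n + 2 * n) ≤ (m : ℤ) * n * ((k : ℤ) - 1) := by
      have h2 := mul_le_mul_of_nonneg_left hvlbZ (show (0:ℤ) ≤ (lam : ℤ) by linarith)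
      rw [hordZ, hk1Z] at h2
      exact h2
    have e1 : (lam : ℤ) * ((n : ℤ) * n + 2 * n) = (n : ℤ) * ((lam : ℤ) * ((n : ℤ) + 2)) := by
      ring
    have e2 : (m : ℤ) * n * ((k : ℤ) - 1) = (n : ℤ) * ((m : ℤ) * ((k : ℤ) - 1)) := by ring
    rw [e1, e2] at h1
    exact le_of_mul_le_mul_left h1 (by linarith)
  constructor
  · -- lam < m^2
    have h2 : (lam : ℤ) * ((n : ℤ) + 2) ≤ (m : ℤ) * ((m : ℤ) * n - 1) :=
      le_trans hkeyineq (mul_le_mul_of_nonneg_left (by linarith) (by linarith))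
    have e3 : (m : ℤ) * ((m : ℤ) * n - 1) = (m : ℤ) * m * n - m := by ring
    have e4 : (lam : ℤ) * ((n : ℤ) + 2) = (lam : ℤ) * n + 2 * lam := by ring
    rw [e3] at h2
    rw [e4] at h2
    have hlmm : (lam : ℤ) < (m : ℤ) * m := by
      by_contra h3
      push_neg at h3
      have h4 : (m : ℤ) * m * n ≤ (lam : ℤ) * n :=
        mul_le_mul_of_nonneg_right h3 (by linarith)
      linarith
    have : lam < m * m := by exact_mod_cast hlmm
    rwa [pow_two]
  · -- r ≤ 4 lam (k-2)
    have h5 : (m : ℤ) * ((k : ℤ) - 1) ≤ (2 * (lam : ℤ)) * ((k : ℤ) - 1) :=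
      mul_le_mul_of_nonneg_right hmlamZ (by linarith)
    have h6 : (lam : ℤ) * ((n : ℤ) + 2) ≤ (lam : ℤ) * (2 * ((k : ℤ) - 1)) := by
      have e5 : (2 * (lam : ℤ)) * ((k : ℤ) - 1) = (lam : ℤ) * (2 * ((k : ℤ) - 1)) := by ring
      rw [e5] at h5
      exact le_trans hkeyineq h5
    have hn2k : (n : ℤ) + 2 ≤ 2 * ((k : ℤ) - 1) :=
      le_of_mul_le_mul_left h6 (by linarith)
    have hZ : (m : ℤ) * n ≤ 4 * (lam : ℤ) * ((k : ℤ) - 2) := by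
      have h7 : (n : ℤ) ≤ 2 * ((k : ℤ) - 2) := by linarith
      have h8 : (m : ℤ) * n ≤ (2 * (lam : ℤ)) * (2 * ((k : ℤ) - 2)) :=
        mul_le_mul hmlamZ h7 (by linarith) (by linarith)
      have e6 : (2 * (lam : ℤ)) * (2 * ((k : ℤ) - 2)) = 4 * (lam : ℤ) * ((k : ℤ) - 2) := by
        ring
      rw [e6] at h8
      exact h8
    have hk2 : ((k - 2 : ℕ) : ℤ) = (k : ℤ) - 2 := by omega
    have h9 : (r : ℤ) ≤ 4 * (lam : ℤ) * ((k - 2 : ℕ) : ℤ) := by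
      rw [hk2, hrmn, Nat.cast_mul]
      exact hZ
    exact_mod_cast h9

theorem half_flag_transitive_point_imprimitive_bounds
    {P : Type*} [Fintype P] [DecidableEq P]
    (blocks : Finset (Finset P)) (v k lam r : ℕ)
    (hD : IsTwoDesign blocks v k lam r)
    (G : Subgroup (Equiv.Perm P))
    (hAut : IsAutGroup G blocks)
    (hHFT : HalfFlagTransitive G blocks)
    (hImp : ∃ C : Finset (Finset P), IsInvariantPartition G C ∧ ¬ TrivialPartition C) :
    lam < Nat.gcd r (2 * lam) ^ 2 ∧ r ≤ 4 * lam * (k - 2) := by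
  classical
  obtain ⟨C, hC, hnt⟩ := hImp
  obtain ⟨hCne, hCuniq, hCinv⟩ := id hC
  rw [TrivialPartition] at hnt
  push_neg at hnt
  obtain ⟨⟨Δ, hΔC, hΔcard⟩, hCneU⟩ := hnt
  obtain ⟨x, hx⟩ := hCne Δ hΔC
  have htrans := point_trans (G := G) hD hHFT
  -- all classes have the same size
  have hsame : ∀ c₁ ∈ C, ∀ c₂ ∈ C, c₁.card = c₂.card := by
    intro c₁ h₁ c₂ h₂
    obtain ⟨y, hy⟩ := hCne c₁ h₁
    obtain ⟨z, hz⟩ := hCne c₂ h₂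
    obtain ⟨g, hg, hgyz⟩ := htrans y z
    have himg : c₁.image ⇑g ∈ C := hCinv g hg c₁ h₁
    have hzin : z ∈ c₁.image ⇑g := by rw [← hgyz]; exact Finset.mem_image_of_mem _ hy
    obtain ⟨c₀, _, huniq⟩ := hCuniq z
    have heq : c₁.image ⇑g = c₂ := by rw [huniq _ ⟨himg, hzin⟩, huniq _ ⟨h₂, hz⟩]
    rw [← heq, Finset.card_image_of_injective _ g.injective]
  have hc2 : 2 ≤ Δ.card := by
    have h1 : 1 ≤ Δ.card := Finset.card_pos.mpr ⟨x, hx⟩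
    omega
  -- v = Δ.card * C.card
  have hclasscount : ∀ y : P, (C.filter (fun cl => y ∈ cl)).card = 1 := by
    intro y
    obtain ⟨cl₀, ⟨h1, h2⟩, huniq⟩ := hCuniq y
    rw [Finset.card_eq_one]
    refine ⟨cl₀, ?_⟩
    ext cl
    simp only [Finset.mem_filter, Finset.mem_singleton]
    constructor
    · rintro ⟨hcl, hycl⟩; exact huniq cl ⟨hcl, hycl⟩
    · rintro rfl; exact ⟨h1, h2⟩
  have hvcd : v = Δ.card * C.card := by
    have h1 : ∀ cl ∈ C, cl.card = ∑ y : P, if y ∈ cl then 1 else 0 := by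
      intro cl _
      rw [← Finset.card_filter]
      congr 1
      ext y; simp
    have h2 : ∑ cl ∈ C, cl.card = ∑ y : P, (C.filter (fun cl => y ∈ cl)).card := by
      rw [Finset.sum_congr rfl h1, Finset.sum_comm]
      exact Finset.sum_congr rfl fun y _ => (Finset.card_filter _ _).symm
    have h3 : ∑ cl ∈ C, cl.card = v := by
      rw [h2, Finset.sum_congr rfl fun y _ => hclasscount y, Finset.sum_const, smul_eq_mul,
        Finset.card_univ, hD.card_points, mul_one]
    have h4 : ∑ cl ∈ C, cl.card = C.card * Δ.card := by
      rw [Finset.sum_congr rfl fun cl hcl => hsame cl hcl Δ hΔC, Finset.sum_const, smul_eq_mul]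
    rw [← h3, h4, mul_comm]
  have hd2 : 2 ≤ C.card := by
    have h1 : 1 ≤ C.card := Finset.card_pos.mpr ⟨Δ, hΔC⟩
    rcases Nat.lt_or_ge C.card 2 with h | h
    · exfalso
      have hCcard : C.card = 1 := by omega
      obtain ⟨cl, hcl⟩ := Finset.card_eq_one.mp hCcard
      have hΔcl : Δ = cl := by
        have := hΔC; rw [hcl, Finset.mem_singleton] at this; exact this
      have huniv : cl = Finset.univ := by
        apply Finset.eq_univ_of_forall
        intro y
        obtain ⟨c₀, ⟨hc₀C, hyc₀⟩, _⟩ := hCuniq y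
        rw [hcl, Finset.mem_singleton] at hc₀C
        rwa [← hc₀C]
      exact hCneU (by rw [hcl, huniv])
    · exact h
  obtain ⟨E, hE⟩ := key_claim hD hAut hHFT hC hΔC hx
  exact final_arith v k lam r Δ.card C.card E hD.lam_pos (by have := hD.k_gt; omega)
    hD.k_lt (hr_ge_k hD) (horder hD) hE hvcd hc2 hd2
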